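/- Let T⁺ > T⁻ > 0, L > 0 and let k₁, k₂ be integers, not both zero. Then every complex root of the polynomial Q(X) = X² + 2iπk₂(T⁺ + T⁻)X − 4π²k₂²T⁺T⁻ + (4k₂²L/(k₁² + 4k₂²))(T⁺ − T⁻) has real part equal to zero. Hence the linearization around the good-curvature equilibrium admits no growing Fourier mode. -/

import Mathlib

/-! Completing the square, `Q(z) = (z + iπk₂(T⁺ + T⁻))² + C` with the real number
`C = π²k₂²(T⁺ - T⁻)² + 4k₂²L(T⁺ - T⁻)/(k₁² + 4k₂²) ≥ 0`. So `z + iπk₂(T⁺ + T⁻)` squares to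
`-C ≤ 0` and is purely imaginary, and so is `z`, since the shift is purely imaginary. -/

open Real Complex

/-- The characteristic polynomial of the Fourier-mode system obtained by
linearizing the bi-temperature drift-fluid system around the good-curvature
equilibrium `μ^{good}`. -/
noncomputable def charPolyGood (Tp Tm L : ℝ) (k₁ k₂ : ℤ) (X : ℂ) : ℂ :=
  X ^ 2 + 2 * (Real.pi : ℂ) * Complex.I * (k₂ : ℂ) * ((Tp : ℂ) + (Tm : ℂ)) * X
    - 4 * (Real.pi : ℂ) ^ 2 * (k₂ : ℂ) ^ 2 * ((Tp : ℂ) * (Tm : ℂ))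
    + 4 * (k₂ : ℂ) ^ 2 * (L : ℂ) / ((k₁ : ℂ) ^ 2 + 4 * (k₂ : ℂ) ^ 2) * ((Tp : ℂ) - (Tm : ℂ))

theorem Complex.re_eq_zero_of_sq_eq_neg_ofReal {w : ℂ} {c : ℝ} (hc : 0 ≤ c)
    (h : w ^ 2 = -(c : ℂ)) : w.re = 0 := by
  have hre : w.re * w.re - w.im * w.im = -c := by
    simpa [sq, mul_re] using congrArg re h
  have him : w.re * w.im = 0 := by
    have : w.re * w.im + w.im * w.re = 0 := by simpa [sq, mul_im] using congrArg im h
    linarith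
  rcases mul_eq_zero.mp him with hw | hw
  · exact hw
  · rw [hw] at hre
    nlinarith

/-- `-4(b² + d)` is the discriminant of `X² + 2ibX + d`. -/
theorem Complex.re_eq_zero_of_sq_add_mul_I_add_eq_zero {z : ℂ} {b d : ℝ} (hbd : 0 ≤ b ^ 2 + d)
    (hz : z ^ 2 + 2 * (b * I) * z + d = 0) : z.re = 0 := by
  have hsq : (z + b * I) ^ 2 = -((b ^ 2 + d : ℝ) : ℂ) := by
    push_cast
    linear_combination hz + (b : ℂ) ^ 2 * I_sq
  simpa using re_eq_zero_of_sq_eq_neg_ofReal hbd hsq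

theorem no_growing_mode_good_curvature_general
    (Tp Tm L : ℝ) (hT : Tm < Tp) (hL : 0 < L)
    (k₁ k₂ : ℤ) :
    ∀ z : ℂ, charPolyGood Tp Tm L k₁ k₂ z = 0 → z.re = 0 := by
  intro z hz
  set b : ℝ := π * k₂ * (Tp + Tm)
  set d : ℝ := -4 * π ^ 2 * k₂ ^ 2 * (Tp * Tm) + 4 * k₂ ^ 2 * L / (k₁ ^ 2 + 4 * k₂ ^ 2) * (Tp - Tm)
  have hbd : 0 ≤ b ^ 2 + d := by
    have hgap : 0 ≤ Tp - Tm := by linarith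
    have hcompleted : b ^ 2 + d
        = (π * k₂ * (Tp - Tm)) ^ 2 + 4 * k₂ ^ 2 * L / (k₁ ^ 2 + 4 * k₂ ^ 2) * (Tp - Tm) := by
      ring
    rw [hcompleted]
    exact add_nonneg (sq_nonneg _) (mul_nonneg (by positivity) hgap)
  refine re_eq_zero_of_sq_add_mul_I_add_eq_zero hbd ?_
  rw [← hz, charPolyGood]
  push_cast [b, d]
  ring

/-- Around the good-curvature equilibrium, every root of the characteristic
polynomial of a Fourier mode is purely imaginary: there is no growing mode. -/
theorem no_growing_mode_good_curvature
    (Tp Tm L : ℝ) (hTm : 0 < Tm) (hT : Tm < Tp) (hL : 0 < L)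
    (k₁ k₂ : ℤ) (hk : ¬(k₁ = 0 ∧ k₂ = 0)) :
    ∀ z : ℂ, charPolyGood Tp Tm L k₁ k₂ z = 0 → z.re = 0 :=
  no_growing_mode_good_curvature_general Tp Tm L hT hL k₁ k₂
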